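/- Let Γ₂ be the graph on vertices {a, b, c, d} with edges {a,b}, {a,c}, {b,c}, {b,d}, {c,d}. There exists a game G over Γ₂ such that G ⊨ {a} ▷ {d} but it is not the case that G ⊨ {b,c} ▷ {d}. (In particular, the formula {a} ▷ {d} → {b,c} ▷ {d} is not valid over Γ₂, even though vertices b and c separate a from d.) -/

import Mathlib

/-- A strategic game over a dependency graph `Γ`: each player (vertex) `v` has a
finite nonempty strategy set, and the payoff of `v` depends only on the
strategies of players in `Adj⁺(v) = {v} ∪ {w : Γ.Adj v w}`. -/
structure GameOn {V : Type} (Γ : SimpleGraph V) where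
  S : V → Type
  instFin : ∀ v, Fintype (S v)
  instNonempty : ∀ v, Nonempty (S v)
  u : (v : V) → ((w : V) → S w) → ℝ
  u_local : ∀ (v : V) (s t : (w : V) → S w),
    (∀ w, (w = v ∨ Γ.Adj v w) → s w = t w) → u v s = u v t

/-- Nash equilibrium: no player can strictly increase his payoff by a
unilateral deviation. -/
def GameOn.NE {V : Type} [DecidableEq V] {Γ : SimpleGraph V} (G : GameOn Γ)
    (s : (v : V) → G.S v) : Prop :=
  ∀ (v : V) (x : G.S v), G.u v (Function.update s v x) ≤ G.u v s

/-- `G.Det A B` is the semantics of `A ▷ B`: any two Nash equilibria that agree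
on `A` also agree on `B`. -/
def GameOn.Det {V : Type} [DecidableEq V] {Γ : SimpleGraph V} (G : GameOn Γ)
    (A B : Set V) : Prop :=
  ∀ s t : (v : V) → G.S v, G.NE s → G.NE t →
    (∀ x ∈ A, s x = t x) → ∀ x ∈ B, s x = t x

/-- The border of a set of vertices `U`: vertices of `U` adjacent to some vertex outside `U`. -/
def border {V : Type} (Γ : SimpleGraph V) (U : Set V) : Set V :=
  {v | v ∈ U ∧ ∃ w, w ∉ U ∧ Γ.Adj v w}

/-- The graph `Γ₂` on vertices `a = 0`, `b = 1`, `c = 2`, `d = 3` with edges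
`{a,b}`, `{a,c}`, `{b,c}`, `{b,d}`, `{c,d}`. -/
def Gamma2 : SimpleGraph (Fin 4) :=
  SimpleGraph.fromRel (fun x y =>
    (x, y) ∈ ([(0, 1), (0, 2), (1, 2), (1, 3), (2, 3)] : List (Fin 4 × Fin 4)))

noncomputable def G2 : GameOn Gamma2 where
  S _ := Fin 2
  instFin _ := inferInstance
  instNonempty _ := inferInstance
  u v s :=
    if v = 1 then (if s 3 = s 0 then 0 else if s 1 = s 2 then 1 else 0)
    else if v = 2 then (if s 3 = s 0 then 0 else if s 1 = s 2 then 0 else 1)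
    else 0
  u_local v s t h := by
    have hadj : ∀ x y : Fin 4, x ≠ y →
        ((x, y) ∈ ([(0, 1), (0, 2), (1, 2), (1, 3), (2, 3)] : List (Fin 4 × Fin 4)) ∨
         (y, x) ∈ ([(0, 1), (0, 2), (1, 2), (1, 3), (2, 3)] : List (Fin 4 × Fin 4))) →
        Gamma2.Adj x y := by
      intro x y h1 h2
      rw [Gamma2, SimpleGraph.fromRel_adj]
      exact ⟨h1, h2⟩
    by_cases h1 : v = 1
    · subst h1
      rw [h 0 (Or.inr (hadj _ _ (by decide) (by decide))), h 1 (Or.inl rfl),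
        h 2 (Or.inr (hadj _ _ (by decide) (by decide))),
        h 3 (Or.inr (hadj _ _ (by decide) (by decide)))]
    · by_cases h2 : v = 2
      · subst h2
        rw [h 0 (Or.inr (hadj _ _ (by decide) (by decide))),
          h 1 (Or.inr (hadj _ _ (by decide) (by decide))), h 2 (Or.inl rfl),
          h 3 (Or.inr (hadj _ _ (by decide) (by decide)))]
      · simp [h1, h2]

lemma G2_NE_of (s : Fin 4 → Fin 2) (h : s 3 = s 0) : G2.NE s := by
  intro v x
  fin_cases v <;>
    simp [G2, GameOn.NE, Function.update_of_ne, h, show (3:Fin 4) ≠ 1 by decide,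
      show (0:Fin 4) ≠ 1 by decide, show (3:Fin 4) ≠ 2 by decide,
      show (0:Fin 4) ≠ 2 by decide] <;> simp [Function.update, h]

lemma G2_NE_eq (s : Fin 4 → Fin 2) (hs : G2.NE s) : s 3 = s 0 := by
  by_contra hne
  by_cases h12 : s 1 = s 2
  · have := hs 2 (s 2 + 1)
    simp [G2, GameOn.NE, Function.update_of_ne, hne, h12,
      show (3:Fin 4) ≠ 2 by decide, show (0:Fin 4) ≠ 2 by decide,
      show (1:Fin 4) ≠ 2 by decide,
      show ∀ a : Fin 2, a ≠ a + 1 from by decide] at this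
    exact absurd this (by norm_num)
  · have := hs 1 (s 2)
    simp [G2, GameOn.NE, Function.update_of_ne, hne, h12,
      show (3:Fin 4) ≠ 1 by decide, show (0:Fin 4) ≠ 1 by decide,
      show (2:Fin 4) ≠ 1 by decide] at this
    exact absurd this (by norm_num)

/-- There is a game `G` over `Γ₂` with `G ⊨ a ▷ d` but `G ⊭ b,c ▷ d`
(with `a,b,c,d = 0,1,2,3`); hence `a ▷ d → b,c ▷ d` is not valid over `Γ₂`,
even though `b` and `c` separate `a` from `d`. -/
theorem gamma2_counterexample :
    ∃ G : GameOn Gamma2, G.Det {0} {3} ∧ ¬G.Det {1, 2} {3} := by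
  refine ⟨G2, ?_, ?_⟩
  · intro s t hs ht hA x hx
    have hx3 : x = 3 := hx
    subst hx3
    rw [G2_NE_eq s hs, G2_NE_eq t ht, hA 0 rfl]
  · intro h
    have hs : G2.NE (fun _ => (0 : Fin 2)) := G2_NE_of _ rfl
    have ht : G2.NE (![1, 0, 0, 1] : ∀ _ : Fin 4, Fin 2) := G2_NE_of _ rfl
    have := h _ _ hs ht (by intro x hx; rcases hx with h | h <;> subst h <;> rfl) 3 rfl
    exact (by decide : ((0:Fin 2) = 1) → False) this
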